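/- arXiv:1612.08337 — 5 statements merged into one kernel-verified Lean document; each statement's English description precedes it below -/
import Mathlib

section
/- Let A ∈ ℝ^{m×n}, b ∈ ℝ^m with m ≥ n+1, and let σ_{n+1} be the smallest singular value of the augmented matrix [A, b], with V ∈ ℝ^{(n+1)×(n+1)} orthogonal such that [A,b] = UΣVᵀ is an SVD. Suppose the last entry v_{n+1,n+1} of the last column v_{n+1} of V is nonzero, and define x ∈ ℝⁿ by [xᵀ, −1]ᵀ = −v_{n+1}/v_{n+1,n+1}. Then x satisfies the equation (AᵀA − σ_{n+1}² I_n) x = Aᵀ b. -/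
/-- TLS normal equation: if `v` is a right singular vector of the augmented matrix
`M = [A, b]` for the singular value `σ` (i.e. `MᵀM v = σ² v`), with last entry
`v_{n+1,n+1} ≠ 0`, and `x` is defined by `[xᵀ, −1]ᵀ = −v / v_{n+1,n+1}`, then
`(AᵀA − σ² I) x = Aᵀ b`. -/
theorem tls_normal_equation (m n : ℕ) (hm : n + 1 ≤ m)
    (A : Matrix (Fin m) (Fin n) ℝ) (b : Fin m → ℝ)
    (M : Matrix (Fin m) (Fin (n + 1)) ℝ)
    (hMA : ∀ i (j : Fin n), M i (Fin.castSucc j) = A i j)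
    (hMb : ∀ i, M i (Fin.last n) = b i)
    (σ : ℝ) (v : Fin (n + 1) → ℝ)
    (hv : (M.transpose * M).mulVec v = (σ ^ 2) • v)
    (hnz : v (Fin.last n) ≠ 0)
    (x : Fin n → ℝ)
    (hx : ∀ j, x j = -(v (Fin.castSucc j)) / v (Fin.last n)) :
    (A.transpose * A - σ ^ 2 • (1 : Matrix (Fin n) (Fin n) ℝ)).mulVec x =
      A.transpose.mulVec b := by
  funext j
  have h := congrFun hv (Fin.castSucc j)
  simp only [Matrix.mulVec, Matrix.mul_apply, Matrix.transpose_apply, dotProduct,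
    Pi.smul_apply, smul_eq_mul, Fin.sum_univ_castSucc, hMA, hMb] at h
  simp only [Matrix.mulVec, Matrix.mul_apply, Matrix.transpose_apply, dotProduct,
    Matrix.sub_apply, Matrix.smul_apply, Matrix.one_apply, smul_eq_mul, hMA, hMb, hx]
  rw [Finset.sum_congr rfl (fun k _ => by
    rw [show ((∑ i, A i j * A i k) - σ ^ 2 * (if j = k then 1 else 0)) *
        (-v (Fin.castSucc k) / v (Fin.last n)) =
        ((∑ i, A i j * A i k) * v (Fin.castSucc k)) * (-1 / v (Fin.last n))
        - σ ^ 2 * (if j = k then 1 else 0) * v (Fin.castSucc k) * (-1 / v (Fin.last n))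
      from by ring])]
  rw [Finset.sum_sub_distrib, ← Finset.sum_mul, ← Finset.sum_mul]
  have hdel : (∑ k, σ ^ 2 * (if j = k then 1 else 0) * v (Fin.castSucc k))
      = σ ^ 2 * v (Fin.castSucc j) := by
    simp [mul_ite, Finset.sum_ite_eq]
  rw [hdel]
  rw [show (∑ k, (∑ i, A i j * A i k) * v (Fin.castSucc k)) * (-1 / v (Fin.last n))
      - σ ^ 2 * v (Fin.castSucc j) * (-1 / v (Fin.last n)) =
      (σ ^ 2 * v (Fin.castSucc j) - ∑ k, (∑ i, A i j * A i k) * v (Fin.castSucc k))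
        / v (Fin.last n) from by ring, div_eq_iff hnz]
  linear_combination -h
end

section
/- With the TLS notation: if r = b − Ax = (σ_{n+1}/v_{n+1,n+1}) u_{n+1} with [A,b]ᵀ u_{n+1} = σ_{n+1} v_{n+1}, v_{n+1} = −v_{n+1,n+1}[xᵀ,−1]ᵀ, and v_{n+1,n+1}² = 1/(1+xᵀx), then Aᵀ r = −(‖r‖₂²/(1 + xᵀx)) x. -/
/-- With the TLS notation: if `r = b − Ax = (σ/v_{n+1,n+1}) u`, `[A,b]ᵀ u = σ v`,
`v = −v_{n+1,n+1}·[xᵀ,−1]ᵀ` and `v_{n+1,n+1}² = 1/(1+xᵀx)`, then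
`Aᵀ r = −(‖r‖₂²/(1 + xᵀx)) x`. -/
theorem tls_At_r_formula (m n : ℕ)
    (A : Matrix (Fin m) (Fin n) ℝ) (b : Fin m → ℝ)
    (M : Matrix (Fin m) (Fin (n + 1)) ℝ)
    (hMA : ∀ i (j : Fin n), M i (Fin.castSucc j) = A i j)
    (hMb : ∀ i, M i (Fin.last n) = b i)
    (σ : ℝ) (hσ : 0 < σ)
    (u : Fin m → ℝ) (v : Fin (n + 1) → ℝ) (x : Fin n → ℝ) (r : Fin m → ℝ)
    (hnz : v (Fin.last n) ≠ 0)
    (hv : v = (-(v (Fin.last n))) • (Fin.snoc x (-1 : ℝ) : Fin (n + 1) → ℝ))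
    (hvv : (v (Fin.last n)) ^ 2 = 1 / (1 + ∑ j, (x j) ^ 2))
    (hMu : M.transpose.mulVec u = σ • v)
    (hr : r = b - A.mulVec x)
    (hru : r = (σ / v (Fin.last n)) • u) :
    A.transpose.mulVec r =
      (-((∑ i, (r i) ^ 2) / (1 + ∑ j, (x j) ^ 2))) • x := by
  set c := v (Fin.last n) with hc
  -- key fact 1: ∑ i, A i j * u i = σ * (-c * x j)
  have h1 : ∀ j : Fin n, ∑ i, A i j * u i = σ * (-c * x j) := by
    intro j
    have h := congrFun hMu (Fin.castSucc j)
    have hvj : v (Fin.castSucc j) = -c * x j := by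
      rw [hv]; simp [Fin.snoc_castSucc]
    simpa [Matrix.mulVec, dotProduct, Matrix.transpose_apply, hMA, hvj] using h
  -- key fact 2: ∑ i, b i * u i = σ * c
  have h2 : ∑ i, b i * u i = σ * c := by
    have h := congrFun hMu (Fin.last n)
    have hvl : v (Fin.last n) = c := rfl
    have hsn : v (Fin.last n) = -c * (-1) := by
      rw [hv]; simp [Fin.snoc_last]
    have : ∑ i, M i (Fin.last n) * u i = σ * v (Fin.last n) := by
      simpa [Matrix.mulVec, dotProduct, Matrix.transpose_apply] using h
    calc ∑ i, b i * u i = ∑ i, M i (Fin.last n) * u i := by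
          exact Finset.sum_congr rfl (fun i _ => by rw [hMb])
      _ = σ * c := this
  -- positivity of 1 + ∑ x²
  have hpos : (0:ℝ) < 1 + ∑ j, (x j) ^ 2 := by positivity
  -- ∑ r² = σ² (1 + ∑ x²)
  have hrr : ∑ i, (r i) ^ 2 = σ ^ 2 * (1 + ∑ j, (x j) ^ 2) := by
    have key : ∑ i, r i * u i = σ * c * (1 + ∑ j, (x j) ^ 2) := by
      have : ∑ i, r i * u i
          = ∑ i, b i * u i - ∑ j, x j * ∑ i, A i j * u i := by
        rw [hr]
        have : ∀ i, (b - A.mulVec x) i * u i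
            = b i * u i - ∑ j, A i j * x j * u i := by
          intro i
          simp [Matrix.mulVec, dotProduct, sub_mul, Finset.sum_mul]
        rw [Finset.sum_congr rfl (fun i _ => this i), Finset.sum_sub_distrib]
        congr 1
        rw [Finset.sum_comm]
        refine Finset.sum_congr rfl (fun j _ => ?_)
        rw [Finset.mul_sum]
        exact Finset.sum_congr rfl (fun i _ => by ring)
      rw [this, h2]
      have : ∑ j, x j * ∑ i, A i j * u i = -(σ * c * ∑ j, (x j)^2) := by
        rw [Finset.sum_congr rfl (fun j _ => by rw [h1 j])]
        simp only [Finset.mul_sum, ← Finset.sum_neg_distrib]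
        exact Finset.sum_congr rfl (fun j _ => by ring)
      rw [this]; ring
    calc ∑ i, (r i) ^ 2 = ∑ i, (σ / c) * (r i * u i) := by
          refine Finset.sum_congr rfl (fun i _ => ?_)
          have hri : r i = (σ / c) * u i := by rw [hru]; simp
          rw [pow_two]
          nth_rewrite 2 [hri]
          ring
      _ = (σ / c) * ∑ i, r i * u i := by rw [Finset.mul_sum]
      _ = σ ^ 2 * (1 + ∑ j, (x j) ^ 2) := by
          rw [key]; field_simp
  funext k
  have lhs : A.transpose.mulVec r k = (σ / c) * ∑ i, A i k * u i := by
    simp only [Matrix.mulVec, dotProduct, Matrix.transpose_apply, hru,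
      Pi.smul_apply, smul_eq_mul, Finset.mul_sum]
    exact Finset.sum_congr rfl (fun i _ => by ring)
  rw [lhs, h1 k]
  have : (σ / c) * (σ * (-c * x k)) = -σ^2 * x k := by
    field_simp
  rw [this]
  simp only [Pi.smul_apply, smul_eq_mul, hrr]
  field_simp
end

section
/- Let A ∈ ℝ^{m×n}, b ∈ ℝ^m, let [A,b] = UΣVᵀ be a full SVD with singular values σ₁ ≥ ⋯ ≥ σ_{n+1}, and suppose the genericity condition σ̃_n > σ_{n+1} holds, where σ̃_n is the smallest singular value of A. Let V₁₁ be the leading n×n submatrix of V, let x be the TLS solution defined by [xᵀ,−1]ᵀ = −v_{n+1}/v_{n+1,n+1}, let Q₁ = I_n + xxᵀ, D = diag(σ₁² − σ_{n+1}², …, σ_n² − σ_{n+1}²), and Q = V₁₁ D⁻¹ V₁₁ᵀ. Then the matrix P = AᵀA − σ_{n+1}² I_n is invertible with P⁻¹ = Q₁ Q Q₁. -/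
/-- Explicit inverse of `P = AᵀA − σ_{n+1}² I` for the TLS problem: under the genericity
condition (the smallest singular value `σ̃_n` of `A`, expressed as the infimum of `‖Ay‖₂`
over unit vectors `y`, exceeds `σ_{n+1}`), `P` is invertible and `P⁻¹ = Q₁ Q Q₁` with
`Q₁ = I + xxᵀ`, `Q = V₁₁ D⁻¹ V₁₁ᵀ`, `D = diag(σ₁²−σ_{n+1}²,…,σ_n²−σ_{n+1}²)`. -/
theorem tls_P_inverse_formula (m n : ℕ) (hm : n + 1 ≤ m)
    (A : Matrix (Fin m) (Fin n) ℝ) (b : Fin m → ℝ)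
    (M : Matrix (Fin m) (Fin (n + 1)) ℝ)
    (hMA : ∀ i (j : Fin n), M i (Fin.castSucc j) = A i j)
    (hMb : ∀ i, M i (Fin.last n) = b i)
    (U : Matrix (Fin m) (Fin m) ℝ) (V : Matrix (Fin (n + 1)) (Fin (n + 1)) ℝ)
    (σ : Fin (n + 1) → ℝ)
    (S : Matrix (Fin m) (Fin (n + 1)) ℝ)
    (hU : U.transpose * U = 1) (hU' : U * U.transpose = 1)
    (hV : V.transpose * V = 1) (hV' : V * V.transpose = 1)
    (hσnonneg : ∀ i, 0 ≤ σ i)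
    (hσmono : ∀ i j : Fin (n + 1), i ≤ j → σ j ≤ σ i)
    (hS : ∀ i j, S i j = if (i : ℕ) = (j : ℕ) then σ j else 0)
    (hsvd : M = U * S * V.transpose)
    (hgen : σ (Fin.last n) <
      sInf {r : ℝ | ∃ y : Fin n → ℝ, (∑ j, (y j) ^ 2) = 1 ∧
        r = Real.sqrt (∑ i, (A.mulVec y i) ^ 2)})
    (hnz : V (Fin.last n) (Fin.last n) ≠ 0)
    (x : Fin n → ℝ)
    (hx : ∀ j, x j = -(V (Fin.castSucc j) (Fin.last n)) / V (Fin.last n) (Fin.last n))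
    (Q₁ : Matrix (Fin n) (Fin n) ℝ)
    (hQ₁ : Q₁ = 1 + Matrix.vecMulVec x x)
    (D : Matrix (Fin n) (Fin n) ℝ)
    (hD : D = Matrix.diagonal fun j : Fin n =>
      σ (Fin.castSucc j) ^ 2 - σ (Fin.last n) ^ 2)
    (V₁₁ : Matrix (Fin n) (Fin n) ℝ)
    (hV₁₁ : ∀ i j : Fin n, V₁₁ i j = V (Fin.castSucc i) (Fin.castSucc j))
    (Q : Matrix (Fin n) (Fin n) ℝ)
    (hQ : Q = V₁₁ * D⁻¹ * V₁₁.transpose)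
    (P : Matrix (Fin n) (Fin n) ℝ)
    (hP : P = A.transpose * A - σ (Fin.last n) ^ 2 • (1 : Matrix (Fin n) (Fin n) ℝ)) :
    IsUnit P.det ∧ P⁻¹ = Q₁ * Q * Q₁ := by
  -- abbreviations
  have hL : ∀ j : Fin n, j.castSucc ≠ Fin.last n := fun j => (Fin.castSucc_lt_last j).ne
  -- column orthonormality of V
  have F2 : ∀ a c : Fin (n+1), (∑ i, V i a * V i c) = if a = c then (1:ℝ) else 0 := by
    intro a c
    have h := congrFun (congrFun hV a) c
    simpa [Matrix.mul_apply, Matrix.transpose_apply, Matrix.one_apply] using h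
  -- row orthonormality of V
  have F1 : ∀ a c : Fin (n+1), (∑ k, V a k * V c k) = if a = c then (1:ℝ) else 0 := by
    intro a c
    have h := congrFun (congrFun hV' a) c
    simpa [Matrix.mul_apply, Matrix.transpose_apply, Matrix.one_apply] using h
  -- SᵀS is diagonal
  have hStS : S.transpose * S = Matrix.diagonal (fun k => σ k ^ 2) := by
    ext j k
    simp only [Matrix.mul_apply, Matrix.transpose_apply, hS]
    rcases eq_or_ne j k with rfl | hjk
    · rw [Finset.sum_eq_single (⟨(j:ℕ), lt_of_lt_of_le j.isLt hm⟩ : Fin m)]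
      · simp [Matrix.diagonal_apply_eq, sq]
      · intro i _ hi
        have hne : (i:ℕ) ≠ (j:ℕ) := fun h => hi (Fin.ext h)
        simp [hne]
      · intro h; exact absurd (Finset.mem_univ _) h
    · rw [Matrix.diagonal_apply_ne _ hjk]
      apply Finset.sum_eq_zero
      intro i _
      rcases eq_or_ne ((i:ℕ)) ((j:ℕ)) with h | h
      · have hk : (i:ℕ) ≠ (k:ℕ) := fun h2 => hjk (Fin.ext (h.symm.trans h2))
        simp [hk]
      · simp [h]
  -- MᵀM = V diag(σ²) Vᵀ
  have hMtM : M.transpose * M = V * Matrix.diagonal (fun k => σ k ^ 2) * V.transpose := by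
    rw [hsvd]
    simp only [Matrix.transpose_mul, Matrix.transpose_transpose, Matrix.mul_assoc]
    have h1 : U.transpose * (U * (S * V.transpose)) = S * V.transpose := by
      rw [← Matrix.mul_assoc, hU, Matrix.one_mul]
    rw [h1, ← hStS]
    simp only [Matrix.mul_assoc]
  -- P = V₁₁ D V₁₁ᵀ
  have hPform : P = V₁₁ * D * V₁₁.transpose := by
    ext i j
    have hAtA : (A.transpose * A) i j = (M.transpose * M) i.castSucc j.castSucc := by
      simp [Matrix.mul_apply, Matrix.transpose_apply, hMA]
    have e1 : (M.transpose * M) i.castSucc j.castSucc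
        = ∑ k, V i.castSucc k * σ k ^ 2 * V j.castSucc k := by
      rw [hMtM, Matrix.mul_apply]
      simp [Matrix.mul_diagonal, Matrix.transpose_apply]
    have hδ : ((1:Matrix (Fin n) (Fin n) ℝ)) i j
        = ∑ k, V i.castSucc k * V j.castSucc k := by
      rw [F1, Matrix.one_apply]
      simp [Fin.castSucc_inj]
    have e2 : (V₁₁ * D * V₁₁.transpose) i j
        = ∑ k : Fin n, V i.castSucc k.castSucc *
            (σ k.castSucc ^ 2 - σ (Fin.last n) ^ 2) * V j.castSucc k.castSucc := by
      rw [Matrix.mul_apply]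
      simp [hD, Matrix.mul_diagonal, Matrix.transpose_apply, hV₁₁]
    rw [hP]
    simp only [Matrix.sub_apply, Matrix.smul_apply, smul_eq_mul]
    rw [hAtA, e1, hδ, e2, Finset.mul_sum, ← Finset.sum_sub_distrib,
      Fin.sum_univ_castSucc
        (f := fun k => V i.castSucc k * σ k ^ 2 * V j.castSucc k -
          σ (Fin.last n) ^ 2 * (V i.castSucc k * V j.castSucc k))]
    have hlast : V i.castSucc (Fin.last n) * σ (Fin.last n) ^ 2 * V j.castSucc (Fin.last n) -
        σ (Fin.last n) ^ 2 * (V i.castSucc (Fin.last n) * V j.castSucc (Fin.last n)) = 0 := by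
      ring
    rw [hlast, add_zero]
    exact Finset.sum_congr rfl fun k _ => by ring
  -- key fact: V₁₁ᵀ x = last row of V restricted
  have hxV : ∀ j : Fin n, (∑ i, V₁₁ i j * x i) = V (Fin.last n) j.castSucc := by
    intro j
    have h0 : (∑ i, V i j.castSucc * V i (Fin.last n)) = 0 := by
      rw [F2]; simp [hL j]
    rw [Fin.sum_univ_castSucc] at h0
    have h1 : (∑ i : Fin n, V i.castSucc j.castSucc * V i.castSucc (Fin.last n))
        = -(V (Fin.last n) j.castSucc * V (Fin.last n) (Fin.last n)) := by linarith
    have h2 : (∑ i, V₁₁ i j * x i)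
        = (∑ i : Fin n, V i.castSucc j.castSucc * V i.castSucc (Fin.last n)) *
            (-(V (Fin.last n) (Fin.last n))⁻¹) := by
      rw [Finset.sum_mul]
      exact Finset.sum_congr rfl fun i _ => by
        rw [hV₁₁, hx, div_eq_mul_inv]; ring
    rw [h2, h1]
    field_simp
  -- V₁₁ᵀ Q₁ V₁₁ = 1
  have hQ₁V : V₁₁.transpose * Q₁ * V₁₁ = 1 := by
    ext j k
    have inner : ∀ l : Fin n, (∑ i, V₁₁ i j * Q₁ i l)
        = V₁₁ l j + V (Fin.last n) j.castSucc * x l := by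
      intro l
      rw [hQ₁]
      simp only [Matrix.add_apply, Matrix.one_apply, Matrix.vecMulVec_apply, mul_add,
        Finset.sum_add_distrib]
      congr 1
      · simp [mul_ite]
      · rw [← hxV j, Finset.sum_mul]
        exact Finset.sum_congr rfl fun i _ => by ring
    have expand : (V₁₁.transpose * Q₁ * V₁₁) j k
        = ∑ l, (V₁₁ l j + V (Fin.last n) j.castSucc * x l) * V₁₁ l k := by
      rw [Matrix.mul_apply]
      exact Finset.sum_congr rfl fun l _ => by
        rw [Matrix.mul_apply]
        simp only [Matrix.transpose_apply]
        rw [inner l]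
    have hcol : (∑ l : Fin n, V₁₁ l j * V₁₁ l k)
        = (if j = k then (1:ℝ) else 0)
          - V (Fin.last n) j.castSucc * V (Fin.last n) k.castSucc := by
      have h0 := F2 j.castSucc k.castSucc
      rw [Fin.sum_univ_castSucc] at h0
      have hsimp : (∑ i : Fin n, V i.castSucc j.castSucc * V i.castSucc k.castSucc)
          = (∑ l : Fin n, V₁₁ l j * V₁₁ l k) := by
        exact Finset.sum_congr rfl fun i _ => by rw [hV₁₁, hV₁₁]
      rw [hsimp] at h0
      have : (if j.castSucc = k.castSucc then (1:ℝ) else 0) = (if j = k then (1:ℝ) else 0) := by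
        simp [Fin.castSucc_inj]
      rw [this] at h0
      linarith
    have hxk : (∑ l : Fin n, x l * V₁₁ l k) = V (Fin.last n) k.castSucc := by
      rw [← hxV k]
      exact Finset.sum_congr rfl fun l _ => by ring
    rw [expand]
    simp only [add_mul, Finset.sum_add_distrib, mul_assoc]
    rw [hcol, ← Finset.mul_sum, hxk, Matrix.one_apply]
    ring
  -- consequences of hQ₁V
  have hVQ : V₁₁ * (V₁₁.transpose * Q₁) = 1 := mul_eq_one_comm.mp hQ₁V
  have hQ₁symm : Q₁.transpose = Q₁ := by
    rw [hQ₁]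
    ext i j
    simp [Matrix.transpose_apply, Matrix.vecMulVec_apply, Matrix.one_apply, mul_comm, eq_comm]
  have hQVV : Q₁ * V₁₁ * V₁₁.transpose = 1 := by
    have h := congrArg Matrix.transpose hVQ
    simp only [Matrix.transpose_mul, Matrix.transpose_transpose, Matrix.transpose_one,
      hQ₁symm, Matrix.mul_assoc] at h
    rw [← Matrix.mul_assoc] at h
    exact h
  -- positivity of the quadratic form
  have hquad : ∀ y : Fin n → ℝ, y ≠ 0 →
      σ (Fin.last n) ^ 2 * (∑ i, y i ^ 2) < ∑ i, (A.mulVec y i) ^ 2 := by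
    intro y hy
    have ht : 0 < ∑ i, y i ^ 2 := by
      have hex : ∃ i, y i ≠ 0 := by
        by_contra h; push_neg at h; exact hy (funext h)
      obtain ⟨i, hi⟩ := hex
      exact Finset.sum_pos' (fun i _ => sq_nonneg _) ⟨i, Finset.mem_univ i, by positivity⟩
    set t := ∑ i, y i ^ 2 with htdef
    have hc2 : (Real.sqrt t) ^ 2 = t := Real.sq_sqrt ht.le
    have hcpos : 0 < Real.sqrt t := Real.sqrt_pos.mpr ht
    set u : Fin n → ℝ := fun i => y i / Real.sqrt t with hu
    have hu1 : (∑ j, (u j) ^ 2) = 1 := by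
      simp only [hu, div_pow, hc2, ← Finset.sum_div]
      rw [← htdef, div_self ht.ne']
    have hAu : ∀ i, A.mulVec u i = A.mulVec y i / Real.sqrt t := by
      intro i
      have heq : u = (Real.sqrt t)⁻¹ • y := by
        funext i; simp [hu, div_eq_inv_mul]
      rw [heq, Matrix.mulVec_smul]
      simp [div_eq_inv_mul]
    have hbdd : BddBelow {r : ℝ | ∃ y : Fin n → ℝ, (∑ j, (y j) ^ 2) = 1 ∧
        r = Real.sqrt (∑ i, (A.mulVec y i) ^ 2)} := by
      refine ⟨0, ?_⟩
      rintro r ⟨z, _, rfl⟩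
      exact Real.sqrt_nonneg _
    have hmem : Real.sqrt (∑ i, (A.mulVec u i) ^ 2) ∈ {r : ℝ | ∃ y : Fin n → ℝ,
        (∑ j, (y j) ^ 2) = 1 ∧ r = Real.sqrt (∑ i, (A.mulVec y i) ^ 2)} := ⟨u, hu1, rfl⟩
    have hlt : σ (Fin.last n) < Real.sqrt (∑ i, (A.mulVec u i) ^ 2) :=
      lt_of_lt_of_le hgen (csInf_le hbdd hmem)
    have hAunn : (0:ℝ) ≤ ∑ i, (A.mulVec u i) ^ 2 := Finset.sum_nonneg fun i _ => sq_nonneg _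
    have h2 : σ (Fin.last n) ^ 2 < ∑ i, (A.mulVec u i) ^ 2 := by
      nlinarith [Real.sq_sqrt hAunn, Real.sqrt_nonneg (∑ i, (A.mulVec u i) ^ 2),
        hσnonneg (Fin.last n)]
    have h3 : (∑ i, (A.mulVec u i) ^ 2) = (∑ i, (A.mulVec y i) ^ 2) / t := by
      simp only [hAu, div_pow, hc2, ← Finset.sum_div]
    rw [h3] at h2
    have := mul_lt_mul_of_pos_right h2 ht
    calc σ (Fin.last n) ^ 2 * t < ((∑ i, (A.mulVec y i) ^ 2) / t) * t := this
      _ = ∑ i, (A.mulVec y i) ^ 2 := by field_simp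
  -- det P ≠ 0
  have hPdet : P.det ≠ 0 := by
    intro h
    obtain ⟨y, hy0, hy⟩ := Matrix.exists_mulVec_eq_zero_iff.mpr h
    have hdot : dotProduct y (P.mulVec y)
        = (∑ i, (A.mulVec y i) ^ 2) - σ (Fin.last n) ^ 2 * ∑ i, y i ^ 2 := by
      rw [hP, Matrix.sub_mulVec, dotProduct_sub]
      congr 1
      · rw [← Matrix.mulVec_mulVec, Matrix.dotProduct_mulVec, Matrix.vecMul_transpose]
        simp [dotProduct, sq]
      · rw [Matrix.smul_mulVec, Matrix.one_mulVec, dotProduct_smul]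
        simp [dotProduct, sq, Finset.mul_sum]
    rw [hy] at hdot
    simp only [dotProduct_zero] at hdot
    have := hquad y hy0
    linarith
  -- det D ≠ 0
  have hDdet : IsUnit D.det := by
    have hdet : P.det = V₁₁.det * D.det * V₁₁.det := by
      rw [hPform, Matrix.det_mul, Matrix.det_mul, Matrix.det_transpose]
    refine isUnit_iff_ne_zero.mpr fun h => hPdet ?_
    rw [hdet, h]; ring_nf
  have hDinv : D⁻¹ * D = 1 := Matrix.nonsing_inv_mul D hDdet
  -- the inverse formula
  have key : (Q₁ * Q * Q₁) * P = 1 := by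
    rw [hQ, hPform]
    have step : ∀ Z : Matrix (Fin n) (Fin n) ℝ,
        V₁₁.transpose * (Q₁ * (V₁₁ * Z)) = Z := by
      intro Z
      rw [← Matrix.mul_assoc, ← Matrix.mul_assoc, hQ₁V, Matrix.one_mul]
    simp only [Matrix.mul_assoc]
    rw [step, ← Matrix.mul_assoc D⁻¹ D, hDinv, Matrix.one_mul, ← Matrix.mul_assoc]
    exact hQVV
  exact ⟨isUnit_iff_ne_zero.mpr hPdet, Matrix.inv_eq_left_inv key⟩
end

section
/- Let N ∈ ℝ^{n×(mn)}, H ∈ ℝ^{n×m}, L ∈ ℝ^{k×n}, A ∈ ℝ^{m×n}, b ∈ ℝ^m, and let D_A = diag(vec(A)) and D_b = diag(b). Then max over u ∈ ℝ^k with ‖u‖₁ = 1 of ‖[N D_A, H D_b]ᵀ Lᵀ u‖₁ equals ‖ |L N| vec(|A|) + |L H| |b| ‖_∞, where |·| denotes the componentwise absolute value. -/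
/-- Maximizing `‖[N D_A, H D_b]ᵀ Lᵀ u‖₁` over `‖u‖₁ = 1` yields the mixed condition
number expression `‖ |L N| vec(|A|) + |L H| |b| ‖_∞`. Here `vec(A)` is indexed by
pairs `(i,j) ∈ Fin m × Fin n`, `D_A = diag(vec(A))`, `D_b = diag(b)`. -/
theorem mixed_condition_number_expression (m n k : ℕ)
    (N : Matrix (Fin n) (Fin m × Fin n) ℝ) (H : Matrix (Fin n) (Fin m) ℝ)
    (L : Matrix (Fin k) (Fin n) ℝ)
    (A : Matrix (Fin m) (Fin n) ℝ) (b : Fin m → ℝ)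
    (DA : Matrix (Fin m × Fin n) (Fin m × Fin n) ℝ)
    (hDA : DA = Matrix.diagonal fun p : Fin m × Fin n => A p.1 p.2)
    (Db : Matrix (Fin m) (Fin m) ℝ)
    (hDb : Db = Matrix.diagonal b) :
    sSup {r : ℝ | ∃ u : Fin k → ℝ, (∑ i, |u i|) = 1 ∧
        r = (∑ p : Fin m × Fin n,
              |((N * DA).transpose.mulVec (L.transpose.mulVec u)) p|)
          + ∑ j, |((H * Db).transpose.mulVec (L.transpose.mulVec u)) j|} =
      ⨆ i : Fin k,
        ((∑ p : Fin m × Fin n, |(L * N) i p| * |A p.1 p.2|)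
          + ∑ j, |(L * H) i j| * |b j|) := by
  subst hDA hDb
  set f : Fin k → ℝ := fun i =>
    (∑ p : Fin m × Fin n, |(L * N) i p| * |A p.1 p.2|) + ∑ j, |(L * H) i j| * |b j| with hf
  have key : ∀ u : Fin k → ℝ,
      ((∑ p : Fin m × Fin n,
        |((N * Matrix.diagonal (fun p : Fin m × Fin n => A p.1 p.2)).transpose.mulVec
            (L.transpose.mulVec u)) p|)
        + ∑ j, |((H * Matrix.diagonal b).transpose.mulVec (L.transpose.mulVec u)) j|)
      = (∑ p : Fin m × Fin n, |∑ i, (L * N) i p * A p.1 p.2 * u i|)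
        + ∑ j, |∑ i, (L * H) i j * b j * u i| := by
    intro u
    congr 1
    · refine Finset.sum_congr rfl fun p _ => ?_
      rw [Matrix.mulVec_mulVec, ← Matrix.transpose_mul, ← Matrix.mul_assoc,
        Matrix.mul_assoc L N, ← Matrix.mul_assoc]
      simp [Matrix.mulVec, dotProduct, Matrix.mul_diagonal]
    · refine Finset.sum_congr rfl fun j _ => ?_
      rw [Matrix.mulVec_mulVec, ← Matrix.transpose_mul, ← Matrix.mul_assoc,
        Matrix.mul_assoc L H, ← Matrix.mul_assoc]
      simp [Matrix.mulVec, dotProduct, Matrix.mul_diagonal]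
  rcases Nat.eq_zero_or_pos k with hk | hk
  · subst hk
    have hempty : {r : ℝ | ∃ u : Fin 0 → ℝ, (∑ i, |u i|) = 1 ∧
        r = (∑ p : Fin m × Fin n,
              |((N * Matrix.diagonal (fun p : Fin m × Fin n => A p.1 p.2)).transpose.mulVec
                  (L.transpose.mulVec u)) p|)
          + ∑ j, |((H * Matrix.diagonal b).transpose.mulVec (L.transpose.mulVec u)) j|}
        = (∅ : Set ℝ) := by
      ext r
      simp
    rw [hempty, Real.sSup_empty, Real.iSup_of_isEmpty]
  · haveI : Nonempty (Fin k) := ⟨⟨0, hk⟩⟩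
    have hbdd : BddAbove (Set.range f) := Set.Finite.bddAbove (Set.finite_range f)
    have hle_sup : ∀ i, f i ≤ ⨆ j, f j := fun i => le_ciSup hbdd i
    -- each f i is attained
    have hmem : ∀ i : Fin k, f i ∈ {r : ℝ | ∃ u : Fin k → ℝ, (∑ i, |u i|) = 1 ∧
        r = (∑ p : Fin m × Fin n,
              |((N * Matrix.diagonal (fun p : Fin m × Fin n => A p.1 p.2)).transpose.mulVec
                  (L.transpose.mulVec u)) p|)
          + ∑ j, |((H * Matrix.diagonal b).transpose.mulVec (L.transpose.mulVec u)) j|} := by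
      intro i
      refine ⟨Pi.single i 1, ?_, ?_⟩
      · rw [Finset.sum_eq_single i]
        · simp
        · intro j _ hj; simp [Pi.single_apply, hj]
        · simp
      · simp only [key, hf]
        congr 1
        · refine Finset.sum_congr rfl fun p _ => ?_
          rw [Finset.sum_eq_single i]
          · simp [abs_mul]
          · intro j _ hj; simp [Pi.single_apply, hj]
          · simp
        · refine Finset.sum_congr rfl fun j _ => ?_
          rw [Finset.sum_eq_single i]
          · simp [abs_mul]
          · intro j' _ hj'; simp [Pi.single_apply, hj']
          · simp
    -- upper bound
    have hub : ∀ r ∈ {r : ℝ | ∃ u : Fin k → ℝ, (∑ i, |u i|) = 1 ∧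
        r = (∑ p : Fin m × Fin n,
              |((N * Matrix.diagonal (fun p : Fin m × Fin n => A p.1 p.2)).transpose.mulVec
                  (L.transpose.mulVec u)) p|)
          + ∑ j, |((H * Matrix.diagonal b).transpose.mulVec (L.transpose.mulVec u)) j|},
        r ≤ ⨆ j, f j := by
      rintro r ⟨u, hu, rfl⟩
      rw [key]
      have h1 : (∑ p : Fin m × Fin n, |∑ i, (L * N) i p * A p.1 p.2 * u i|)
          ≤ ∑ i, |u i| * ∑ p : Fin m × Fin n, |(L * N) i p| * |A p.1 p.2| := by
        calc (∑ p : Fin m × Fin n, |∑ i, (L * N) i p * A p.1 p.2 * u i|)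
            ≤ ∑ p : Fin m × Fin n, ∑ i, |(L * N) i p * A p.1 p.2 * u i| :=
              Finset.sum_le_sum fun p _ => Finset.abs_sum_le_sum_abs _ _
          _ = ∑ i, |u i| * ∑ p : Fin m × Fin n, |(L * N) i p| * |A p.1 p.2| := by
              rw [Finset.sum_comm]
              refine Finset.sum_congr rfl fun i _ => ?_
              rw [Finset.mul_sum]
              refine Finset.sum_congr rfl fun p _ => ?_
              rw [abs_mul, abs_mul]; ring
      have h2 : (∑ j, |∑ i, (L * H) i j * b j * u i|)
          ≤ ∑ i, |u i| * ∑ j, |(L * H) i j| * |b j| := by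
        calc (∑ j, |∑ i, (L * H) i j * b j * u i|)
            ≤ ∑ j, ∑ i, |(L * H) i j * b j * u i| :=
              Finset.sum_le_sum fun j _ => Finset.abs_sum_le_sum_abs _ _
          _ = ∑ i, |u i| * ∑ j, |(L * H) i j| * |b j| := by
              rw [Finset.sum_comm]
              refine Finset.sum_congr rfl fun i _ => ?_
              rw [Finset.mul_sum]
              refine Finset.sum_congr rfl fun j _ => ?_
              rw [abs_mul, abs_mul]; ring
      calc (∑ p : Fin m × Fin n, |∑ i, (L * N) i p * A p.1 p.2 * u i|)
            + ∑ j, |∑ i, (L * H) i j * b j * u i|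
          ≤ (∑ i, |u i| * ∑ p : Fin m × Fin n, |(L * N) i p| * |A p.1 p.2|)
            + ∑ i, |u i| * ∑ j, |(L * H) i j| * |b j| := add_le_add h1 h2
        _ = ∑ i, |u i| * f i := by
            rw [← Finset.sum_add_distrib]
            exact Finset.sum_congr rfl fun i _ => by rw [hf]; ring
        _ ≤ ∑ i, |u i| * (⨆ j, f j) :=
            Finset.sum_le_sum fun i _ =>
              mul_le_mul_of_nonneg_left (hle_sup i) (abs_nonneg _)
        _ = ⨆ j, f j := by rw [← Finset.sum_mul, hu, one_mul]
    refine le_antisymm (csSup_le ⟨f ⟨0, hk⟩, hmem _⟩ hub) ?_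
    exact ciSup_le fun i => le_csSup ⟨⨆ j, f j, fun r hr => hub r hr⟩ (hmem i)
end

section
/- Let L ∈ ℝ^{k×n}, N ∈ ℝ^{n×(mn)}, H ∈ ℝ^{n×m}, A ∈ ℝ^{m×n}, b ∈ ℝ^m, and let M_S ∈ ℝ^{(mn)×q}, a ∈ ℝ^q be such that vec(A) = M_S a and |vec(A)| = |M_S| |a| (entrywise). Then ‖ |L N M_S| |a| + |L H| |b| ‖_∞ ≤ ‖ |L N| vec(|A|) + |L H| |b| ‖_∞, i.e., the structured mixed condition number expression is bounded above by the unstructured one. -/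
open Finset Matrix

section

variable {R ι κ μ : Type*} [CommRing R] [LinearOrder R] [IsStrictOrderedRing R] [Fintype κ]

theorem Matrix.abs_mul_apply_le (M : Matrix ι κ R) (P : Matrix κ μ R) (i : ι) (l : μ) :
    |(M * P) i l| ≤ ∑ p, |M i p| * |P p l| := by
  rw [mul_apply]
  exact (abs_sum_le_sum_abs _ _).trans_eq (by simp only [abs_mul])

theorem Matrix.sum_abs_mul_apply_mul_abs_le [Fintype μ] (M : Matrix ι κ R) (P : Matrix κ μ R)
    (a : μ → R) (v : κ → R) (hv : ∀ p, |v p| = ∑ l, |P p l| * |a l|) (i : ι) :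
    ∑ l, |(M * P) i l| * |a l| ≤ ∑ p, |M i p| * |v p| :=
  calc ∑ l, |(M * P) i l| * |a l|
      ≤ ∑ l, (∑ p, |M i p| * |P p l|) * |a l| := by
        gcongr with l
        exact abs_mul_apply_le M P i l
    _ = ∑ p, |M i p| * |v p| := by
        simp only [hv, sum_mul, mul_sum, mul_assoc]
        exact sum_comm

end

theorem structured_le_unstructured_condition_general (m n k q : ℕ)
    (L : Matrix (Fin k) (Fin n) ℝ)
    (N : Matrix (Fin n) (Fin m × Fin n) ℝ) (H : Matrix (Fin n) (Fin m) ℝ)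
    (A : Matrix (Fin m) (Fin n) ℝ) (b : Fin m → ℝ)
    (MS : Matrix (Fin m × Fin n) (Fin q) ℝ) (a : Fin q → ℝ)
    (habs : ∀ p : Fin m × Fin n, |A p.1 p.2| = ∑ l, |MS p l| * |a l|) :
    (⨆ i : Fin k,
        ((∑ l, |(L * N * MS) i l| * |a l|) + ∑ j, |(L * H) i j| * |b j|)) ≤
      ⨆ i : Fin k,
        ((∑ p : Fin m × Fin n, |(L * N) i p| * |A p.1 p.2|)
          + ∑ j, |(L * H) i j| * |b j|) :=
  ciSup_mono (Set.finite_range _).bddAbove fun i =>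
    add_le_add_left (sum_abs_mul_apply_mul_abs_le (L * N) MS a (fun p => A p.1 p.2) habs i) _

/-- The structured mixed condition number expression is bounded above by the
unstructured one: if `vec(A) = M_S a` and `|vec(A)| = |M_S||a|` entrywise, then
`‖ |L N M_S| |a| + |L H| |b| ‖_∞ ≤ ‖ |L N| vec(|A|) + |L H| |b| ‖_∞`. -/
theorem structured_le_unstructured_condition (m n k q : ℕ)
    (L : Matrix (Fin k) (Fin n) ℝ)
    (N : Matrix (Fin n) (Fin m × Fin n) ℝ) (H : Matrix (Fin n) (Fin m) ℝ)
    (A : Matrix (Fin m) (Fin n) ℝ) (b : Fin m → ℝ)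
    (MS : Matrix (Fin m × Fin n) (Fin q) ℝ) (a : Fin q → ℝ)
    (hvec : (fun p : Fin m × Fin n => A p.1 p.2) = MS.mulVec a)
    (habs : ∀ p : Fin m × Fin n, |A p.1 p.2| = ∑ l, |MS p l| * |a l|) :
    (⨆ i : Fin k,
        ((∑ l, |(L * N * MS) i l| * |a l|) + ∑ j, |(L * H) i j| * |b j|)) ≤
      ⨆ i : Fin k,
        ((∑ p : Fin m × Fin n, |(L * N) i p| * |A p.1 p.2|)
          + ∑ j, |(L * H) i j| * |b j|) :=
  structured_le_unstructured_condition_general m n k q L N H A b MS a habs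
end
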